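/- For a memoryless RDS, the function P_0(x) := P(ω : (ω,x) is asymptotically stable) satisfies the supermartingale-type inequality P_0(x) ≥ ∫ P_0(y) φ_x^t(dy) for all x ∈ X and t ≥ 0; if moreover every map φ(t,ω) is an open mapping, equality holds. -/

import Mathlib

/-!
Memorylessness makes `φ(t,·)x`, which is `F_t`-measurable, independent of `θ^t` viewed as an
`F_∞`-valued map, and `θ^t` preserves `P`; so the law of `(φ(t,·)x, θ^t)` on `X × (Ω, F_∞)` is
`φ_x^t ⊗ P`. The stable pairs form a `Borel ⊗ F_∞`-measurable set (contraction only has to be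
tested on a countable basis and, by continuity, on a countable dense set), so Fubini gives
`∫ P₀ dφ_x^t = P(ω : (θ^t ω, φ(t,ω)x) is stable)`. By the cocycle identity
`φ(s, θ^t ω) ∘ φ(t,ω) = φ(t+s, ω)`, a set contracts under `ω` iff its image under `φ(t,ω)`
contracts under `θ^t ω`: pulling back a contracting neighbourhood of `φ(t,ω)x` gives one of `x`,
and if `φ(t,ω)` is open, pushing forward a neighbourhood of `x` gives one of `φ(t,ω)x`.
-/

open MeasureTheory ProbabilityTheory Filter Topology

/-- A (discrete-time) filtered random dynamical system over a memoryless stationary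
noise space, on a metric space `X`. -/
structure MRDS (Ω X : Type*) [mΩ : MeasurableSpace Ω] [MetricSpace X]
    [mX : MeasurableSpace X] [BorelSpace X] where
  P : Measure Ω
  hprob : IsProbabilityMeasure P
  F : ℕ → MeasurableSpace Ω
  hle : ∀ t, F t ≤ mΩ
  hmono : Monotone F
  θ : ℕ → Ω → Ω
  hθ0 : θ 0 = id
  hθadd : ∀ s t, θ (s + t) = θ s ∘ θ t
  hθmeas : ∀ s t, @Measurable Ω Ω (F (s + t)) (F s) (θ t)
  hθpres : ∀ t, MeasurePreserving (θ t) P P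
  memless : ∀ s, Indep (F s) ((⨆ t, F t).comap (θ s)) P
  φ : ℕ → Ω → X → X
  hφcont : ∀ t ω, Continuous (φ t ω)
  hφmeas : ∀ t, @Measurable (Ω × X) X ((F t).prod mX) mX (fun p => φ t p.1 p.2)
  hφ0 : ∀ ω, φ 0 ω = id
  hφcocycle : ∀ s t ω, φ (s + t) ω = φ t (θ s ω) ∘ φ s ω

namespace MRDS

variable {Ω X : Type*} [MeasurableSpace Ω] [MetricSpace X]
  [MeasurableSpace X] [BorelSpace X]

/-- The one-point transition probabilities `φ_x^t`. -/
noncomputable def law (R : MRDS Ω X) (x : X) (t : ℕ) : Measure X :=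
  R.P.map (fun ω => R.φ t ω x)

/-- A closed set that is forward-invariant for the one-point transition probabilities. -/
def FwdInv (R : MRDS Ω X) (K : Set X) : Prop :=
  IsClosed K ∧ ∀ x ∈ K, ∀ t, R.law x t K = 1

/-- A minimal set: non-empty, closed, forward-invariant, with no proper non-empty closed
forward-invariant subsets. -/
def Minimal (R : MRDS Ω X) (K : Set X) : Prop :=
  K.Nonempty ∧ R.FwdInv K ∧ ∀ K' ⊆ K, R.FwdInv K' → K' = K ∨ K' = ∅

/-- `A` contracts under the noise realisation `ω`. -/
def contracts (R : MRDS Ω X) (ω : Ω) (A : Set X) : Prop :=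
  Tendsto (fun t => EMetric.diam (R.φ t ω '' A)) atTop (𝓝 0)

/-- `(ω, x)` is an asymptotically stable pair. -/
def stablePair (R : MRDS Ω X) (ω : Ω) (x : X) : Prop :=
  ∃ U ∈ 𝓝 x, R.contracts ω U

/-- The set of asymptotically stable pairs. -/
def O (R : MRDS Ω X) : Set (Ω × X) := {p | R.stablePair p.1 p.2}

/-- The set of noise realisations under which `U` contracts. -/
def EU (R : MRDS Ω X) (U : Set X) : Set Ω := {ω | R.contracts ω U}

/-- `x` is potentially stable. -/
def potStable (R : MRDS Ω X) (x : X) : Prop := 0 < R.P {ω | R.stablePair ω x}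

/-- `x` is almost surely stable. -/
def asStable (R : MRDS Ω X) (x : X) : Prop := R.P {ω | R.stablePair ω x} = 1

/-- `φ` is globally synchronising. -/
def synchronising (R : MRDS Ω X) : Prop :=
  ∀ x y : X,
    R.P {ω | Tendsto (fun t => dist (R.φ t ω x) (R.φ t ω y)) atTop (𝓝 0)} = 1

/-- `φ` is stably synchronising. -/
def stablySynchronising (R : MRDS Ω X) : Prop :=
  R.synchronising ∧ ∀ x : X, R.asStable x

/-- `ρ` is a stationary measure for the one-point transition probabilities. -/
def stationary (R : MRDS Ω X) (ρ : Measure X) : Prop :=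
  ∀ t, ∀ A : Set X, MeasurableSet A → ∫⁻ x, R.law x t A ∂ρ = ρ A

end MRDS

theorem Metric.ediam_image_eq_iSup {α β : Type*} [PseudoEMetricSpace β] (f : α → β)
    (s : Set α) : Metric.ediam (f '' s) = ⨆ a ∈ s, ⨆ b ∈ s, edist (f a) (f b) := by
  simp only [Metric.ediam, iSup_image]

theorem Dense.ediam_image_inter {α β : Type*} [TopologicalSpace α] [PseudoEMetricSpace β]
    {D U : Set α} (hD : Dense D) (hU : IsOpen U) {f : α → β} (hf : Continuous f) :
    Metric.ediam (f '' (U ∩ D)) = Metric.ediam (f '' U) := by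
  refine le_antisymm (Metric.ediam_mono (Set.image_mono Set.inter_subset_left)) ?_
  calc Metric.ediam (f '' U)
      ≤ Metric.ediam (closure (f '' (U ∩ D))) :=
        Metric.ediam_mono <| (Set.image_mono (hD.open_subset_closure_inter hU)).trans
          (image_closure_subset_closure_image hf)
    _ = Metric.ediam (f '' (U ∩ D)) := Metric.ediam_closure _

namespace MRDS

variable {Ω X : Type*} [mΩ : MeasurableSpace Ω] [MetricSpace X] [mX : MeasurableSpace X]
  [BorelSpace X] (R : MRDS Ω X)

instance : IsProbabilityMeasure R.P := R.hprob

/-- The paper's `F_∞`. -/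
abbrev Fsup : MeasurableSpace Ω := ⨆ t, R.F t

theorem Fsup_le : R.Fsup ≤ mΩ := iSup_le R.hle

theorem measurable_φ_apply (t : ℕ) (x : X) : Measurable[R.F t] (fun ω => R.φ t ω x) :=
  (R.hφmeas t).comp (measurable_id.prodMk measurable_const)

theorem measurable_θ_Fsup (t : ℕ) : Measurable[mΩ, R.Fsup] (R.θ t) := by
  rw [measurable_iff_comap_le, Fsup, MeasurableSpace.comap_iSup, iSup_le_iff]
  exact fun s => (R.hθmeas s t).comap_le.trans (R.hle (s + t))

theorem contracts_mono {ω : Ω} {A B : Set X} (h : A ⊆ B) (hB : R.contracts ω B) :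
    R.contracts ω A :=
  tendsto_of_tendsto_of_tendsto_of_le_of_le tendsto_const_nhds hB
    (fun _ => zero_le) (fun _ => Metric.ediam_mono (Set.image_mono h))

theorem contracts_θ_image_iff {t : ℕ} {ω : Ω} {A : Set X} :
    R.contracts (R.θ t ω) (R.φ t ω '' A) ↔ R.contracts ω A := by
  have hshift : ∀ s, R.φ s (R.θ t ω) '' (R.φ t ω '' A) = R.φ (s + t) ω '' A := fun s => by
    rw [add_comm, R.hφcocycle, Set.image_comp]
  simp only [contracts, hshift]
  exact tendsto_add_atTop_iff_nat (f := fun s => Metric.ediam (R.φ s ω '' A)) t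

theorem stablePair_of_stablePair_θ_φ {t : ℕ} {ω : Ω} {x : X}
    (h : R.stablePair (R.θ t ω) (R.φ t ω x)) : R.stablePair ω x := by
  obtain ⟨V, hV, hcontr⟩ := h
  exact ⟨R.φ t ω ⁻¹' V, (R.hφcont t ω).continuousAt.preimage_mem_nhds hV,
    R.contracts_θ_image_iff.1 (R.contracts_mono (Set.image_preimage_subset _ _) hcontr)⟩

theorem stablePair_θ_φ_of_isOpenMap {t : ℕ} {ω : Ω} {x : X} (hopen : IsOpenMap (R.φ t ω))
    (h : R.stablePair ω x) : R.stablePair (R.θ t ω) (R.φ t ω x) := by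
  obtain ⟨U, hU, hcontr⟩ := h
  exact ⟨R.φ t ω '' interior U,
    (hopen _ isOpen_interior).mem_nhds (Set.mem_image_of_mem _ (mem_interior_iff_mem_nhds.2 hU)),
    R.contracts_θ_image_iff.2 (R.contracts_mono interior_subset hcontr)⟩

theorem indepFun_φ_θ (t : ℕ) (x : X) :
    @IndepFun Ω X Ω _ mX R.Fsup (fun ω => R.φ t ω x) (R.θ t) R.P :=
  (IndepFun_iff_Indep (mβ := mX) (mγ := R.Fsup) _ _ _).2
    (indep_of_indep_of_le_left (R.memless t) (R.measurable_φ_apply t x).comap_le)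

theorem map_θ_eq_trim (t : ℕ) :
    @Measure.map Ω Ω _ R.Fsup (R.θ t) R.P = R.P.trim R.Fsup_le := by
  refine @Measure.ext Ω R.Fsup _ _ fun s hs => ?_
  rw [Measure.map_apply (R.measurable_θ_Fsup t) hs, trim_measurableSet_eq _ hs]
  exact (R.hθpres t).measure_preimage (R.Fsup_le s hs).nullMeasurableSet

theorem map_φ_θ_eq_prod (x : X) (t : ℕ) :
    @Measure.map Ω (X × Ω) _ (mX.prod R.Fsup) (fun ω => (R.φ t ω x, R.θ t ω)) R.P =
      @Measure.prod X Ω mX R.Fsup (R.law x t) (R.P.trim R.Fsup_le) := by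
  rw [law, ← R.map_θ_eq_trim]
  exact (R.indepFun_φ_θ t x).map_prod_eq_prod_map_map
    ((R.measurable_φ_apply t x).mono (R.hle t) le_rfl).aemeasurable
    ⟨R.θ t, R.measurable_θ_Fsup t, .rfl⟩

variable [SecondCountableTopology X]

theorem measurableSet_EU {U : Set X} (hU : IsOpen U) : MeasurableSet[R.Fsup] (R.EU U) := by
  obtain ⟨D, hDc, hD⟩ := TopologicalSpace.exists_countable_dense X
  have hdiam : ∀ s, Measurable[R.Fsup] (fun ω => Metric.ediam (R.φ s ω '' U)) := fun s => by
    simp only [← hD.ediam_image_inter hU (R.hφcont s _), Metric.ediam_image_eq_iSup]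
    have hφ : ∀ a, Measurable[R.Fsup] (fun ω => R.φ s ω a) := fun a =>
      (R.measurable_φ_apply s a).mono (le_iSup R.F s) le_rfl
    exact Measurable.biSup _ (hDc.mono Set.inter_subset_right) fun a _ =>
      Measurable.biSup _ (hDc.mono Set.inter_subset_right) fun b _ =>
        continuous_edist.measurable.comp ((hφ a).prodMk (hφ b))
  exact measurableSet_tendsto (𝓝 0) hdiam

theorem stablePair_iff_exists_countableBasis {ω : Ω} {x : X} :
    R.stablePair ω x ↔
      ∃ V ∈ TopologicalSpace.countableBasis X, x ∈ V ∧ R.contracts ω V := by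
  constructor
  · rintro ⟨U, hU, hcontr⟩
    obtain ⟨V, hV, hxV, hVU⟩ := (TopologicalSpace.isBasis_countableBasis X).mem_nhds_iff.1 hU
    exact ⟨V, hV, hxV, R.contracts_mono hVU hcontr⟩
  · rintro ⟨V, hV, hxV, hcontr⟩
    exact ⟨V, (TopologicalSpace.isOpen_of_mem_countableBasis hV).mem_nhds hxV, hcontr⟩

theorem measurableSet_stablePair :
    MeasurableSet[mX.prod R.Fsup] {p : X × Ω | R.stablePair p.2 p.1} := by
  have hunion : {p : X × Ω | R.stablePair p.2 p.1} =
      ⋃ V ∈ TopologicalSpace.countableBasis X, V ×ˢ R.EU V := by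
    ext ⟨x, ω⟩
    simp only [Set.mem_ofPred_eq, Set.mem_iUnion, Set.mem_prod, exists_prop,
      R.stablePair_iff_exists_countableBasis, EU]
  rw [hunion]
  exact .biUnion (TopologicalSpace.countable_countableBasis X) fun V hV =>
    (TopologicalSpace.isOpen_of_mem_countableBasis hV).measurableSet.prod
      (R.measurableSet_EU (TopologicalSpace.isOpen_of_mem_countableBasis hV))

theorem lintegral_law_stablePair (x : X) (t : ℕ) :
    ∫⁻ y, R.P {ω | R.stablePair ω y} ∂(R.law x t) =
      R.P {ω | R.stablePair (R.θ t ω) (R.φ t ω x)} := by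
  set S := {p : X × Ω | R.stablePair p.2 p.1}
  have hS : MeasurableSet[mX.prod R.Fsup] S := R.measurableSet_stablePair
  have hpair : Measurable[mΩ, mX.prod R.Fsup] (fun ω => (R.φ t ω x, R.θ t ω)) :=
    ((R.measurable_φ_apply t x).mono (R.hle t) le_rfl).prodMk (R.measurable_θ_Fsup t)
  calc ∫⁻ y, R.P {ω | R.stablePair ω y} ∂(R.law x t)
      = ∫⁻ y, R.P.trim R.Fsup_le (Prod.mk y ⁻¹' S) ∂(R.law x t) :=
        lintegral_congr fun y => (trim_measurableSet_eq _ (measurable_prodMk_left hS)).symm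
    _ = @Measure.prod X Ω mX R.Fsup (R.law x t) (R.P.trim R.Fsup_le) S :=
        (@Measure.prod_apply X Ω mX R.Fsup _ _ _ _ hS).symm
    _ = R.P {ω | R.stablePair (R.θ t ω) (R.φ t ω x)} := by
        rw [← R.map_φ_θ_eq_prod, Measure.map_apply hpair hS]
        rfl

end MRDS

/-- The function `P₀(x) = P(ω : (ω,x) asymptotically stable)` satisfies the
supermartingale-type inequality `P₀(x) ≥ ∫ P₀(y) φ_x^t(dy)`; with equality if every map
`φ(t,ω)` is an open mapping. -/
theorem stmt7 {Ω X : Type*} [MeasurableSpace Ω] [MetricSpace X] [CompactSpace X]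
    [MeasurableSpace X] [BorelSpace X] (R : MRDS Ω X) :
    (∀ (x : X) (t : ℕ),
      ∫⁻ y, R.P {ω | R.stablePair ω y} ∂(R.law x t) ≤ R.P {ω | R.stablePair ω x}) ∧
    ((∀ t ω, IsOpenMap (R.φ t ω)) →
      ∀ (x : X) (t : ℕ),
        ∫⁻ y, R.P {ω | R.stablePair ω y} ∂(R.law x t) = R.P {ω | R.stablePair ω x}) := by
  refine ⟨fun x t => ?_, fun hopen x t => ?_⟩ <;> rw [R.lintegral_law_stablePair x t]
  · exact measure_mono fun ω => R.stablePair_of_stablePair_θ_φ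
  · congr 1
    ext ω
    exact ⟨R.stablePair_of_stablePair_θ_φ, R.stablePair_θ_φ_of_isOpenMap (hopen t ω)⟩
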